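/- arXiv:2507.19893 — 6 statements merged into one kernel-verified Lean document; each statement's English description precedes it below -/
import Mathlib

section
/- Fix t ∈ ℝ and y ∈ ℝ^q. Let v be a random vector in ℝ^q with independent and identically distributed components having mean 0 and variance 2, and suppose E[|yᵀv|³] < ∞. Define g(θ) = E[π(t + √θ · yᵀv)] for θ ≥ 0. Then g has a right derivative at θ = 0 equal to π(t)(1−π(t))(1−2π(t)) · yᵀy; that is, lim_{θ→0⁺} (g(θ) − π(t))/θ = π(t)(1−π(t))(1−2π(t)) · yᵀy. -/
/-!
Write `σ` for the logistic function and `S = yᵀv`. Since `σ'''` is bounded (by `1/8`), Taylor's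
formula to second order gives `σ(t + s) = σ(t) + σ'(t) s + σ''(t) s² / 2 + O(|s|³)` uniformly in
`t`. Taking `s = √θ S` and expectations, `E S = 0` and, by independence, `E S² = 2 yᵀy`, so
`(g θ - σ t) / θ = σ''(t) yᵀy + O(√θ E|S|³)`, and `σ'' = σ (1 - σ) (1 - 2σ)`.
-/

open MeasureTheory ProbabilityTheory Real Filter Topology

open Set in
theorem abs_taylor_two_remainder_le {f f' f'' : ℝ → ℝ} {C : ℝ}
    (hf : ∀ x, HasDerivAt f (f' x) x) (hf' : ∀ x, HasDerivAt f' (f'' x) x)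
    (hf'' : ∀ a b, |f'' a - f'' b| ≤ C * |a - b|) (t s : ℝ) :
    |f (t + s) - f t - f' t * s - f'' t / 2 * s ^ 2| ≤ C * |s| ^ 3 := by
  have hC : 0 ≤ C := by simpa using (abs_nonneg _).trans (hf'' 1 0)
  have abs_le_abs_s : ∀ u ∈ uIcc 0 s, |u| ≤ |s| := fun u hu => by
    simpa using abs_sub_left_of_mem_uIcc hu
  have mvt : ∀ {h h' : ℝ → ℝ} {B : ℝ}, (∀ u, HasDerivAt h (h' u) u) →
      (∀ u ∈ uIcc 0 s, |h' u| ≤ B) → ∀ u ∈ uIcc 0 s, |h u - h 0| ≤ B * |u| := by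
    intro h h' B hd hB u hu
    simpa only [Real.norm_eq_abs, sub_zero] using
      (convex_uIcc 0 s).norm_image_sub_le_of_norm_hasDerivWithin_le
        (fun x _ => (hd x).hasDerivWithinAt) hB left_mem_uIcc hu
  have hf'_remainder : ∀ u ∈ uIcc 0 s, |f' (t + u) - f' t - f'' t * u| ≤ C * |s| ^ 2 := by
    intro u hu
    have hd : ∀ u, HasDerivAt (fun u => f' (t + u) - f' t - f'' t * u) (f'' (t + u) - f'' t) u :=
      fun u => by
        have h1 := HasDerivAt.comp_const_add t u (hf' (t + u))
        simpa using (h1.sub_const (f' t)).fun_sub ((hasDerivAt_id' u).const_mul (f'' t))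
    have hB : ∀ w ∈ uIcc 0 s, |f'' (t + w) - f'' t| ≤ C * |s| := fun w hw =>
      (hf'' _ _).trans (by simpa using mul_le_mul_of_nonneg_left (abs_le_abs_s w hw) hC)
    calc |f' (t + u) - f' t - f'' t * u| ≤ C * |s| * |u| := by simpa using mvt hd hB u hu
      _ ≤ C * |s| * |s| := mul_le_mul_of_nonneg_left (abs_le_abs_s u hu) (by positivity)
      _ = C * |s| ^ 2 := by ring
  have hd : ∀ u, HasDerivAt (fun u => f (t + u) - f t - f' t * u - f'' t / 2 * u ^ 2)
      (f' (t + u) - f' t - f'' t * u) u := fun u => by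
    have h1 := HasDerivAt.comp_const_add t u (hf (t + u))
    refine (((h1.sub_const (f t)).fun_sub ((hasDerivAt_id' u).const_mul (f' t))).fun_sub
      ((hasDerivAt_pow 2 u).const_mul (f'' t / 2))).congr_deriv ?_
    push_cast; ring
  calc _ ≤ C * |s| ^ 2 * |s| := by simpa using mvt hd hf'_remainder s right_mem_uIcc
    _ = C * |s| ^ 3 := by ring

namespace Real

theorem sigmoid_eq_exp_div (x : ℝ) : sigmoid x = exp x / (1 + exp x) := by
  rw [sigmoid_def, exp_neg]
  field_simp
  ring

theorem hasDerivAt_sigmoid_deriv (x : ℝ) :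
    HasDerivAt (fun x => sigmoid x * (1 - sigmoid x))
      (sigmoid x * (1 - sigmoid x) * (1 - 2 * sigmoid x)) x := by
  refine ((hasDerivAt_sigmoid x).mul ((hasDerivAt_sigmoid x).const_sub 1)).congr_deriv ?_
  ring

theorem hasDerivAt_sigmoid_deriv_deriv (x : ℝ) :
    HasDerivAt (fun x => sigmoid x * (1 - sigmoid x) * (1 - 2 * sigmoid x))
      (sigmoid x * (1 - sigmoid x) * (1 - 6 * (sigmoid x * (1 - sigmoid x)))) x := by
  refine ((hasDerivAt_sigmoid_deriv x).mul
    (((hasDerivAt_sigmoid x).const_mul 2).const_sub 1)).congr_deriv ?_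
  ring

theorem abs_sigmoid_third_deriv_le (x : ℝ) :
    |sigmoid x * (1 - sigmoid x) * (1 - 6 * (sigmoid x * (1 - sigmoid x)))| ≤ 1 / 8 := by
  have hp : 0 ≤ sigmoid x * (1 - sigmoid x) :=
    mul_nonneg (sigmoid_nonneg x) (sub_nonneg.2 (sigmoid_le_one x))
  have hp' : sigmoid x * (1 - sigmoid x) ≤ 1 / 4 := by nlinarith [sq_nonneg (2 * sigmoid x - 1)]
  rw [abs_le]
  constructor <;> nlinarith

theorem abs_sigmoid_taylor_two_le (t s : ℝ) :
    |sigmoid (t + s) - sigmoid t - sigmoid t * (1 - sigmoid t) * s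
      - sigmoid t * (1 - sigmoid t) * (1 - 2 * sigmoid t) / 2 * s ^ 2| ≤ 1 / 8 * |s| ^ 3 := by
  refine abs_taylor_two_remainder_le hasDerivAt_sigmoid hasDerivAt_sigmoid_deriv
    (fun a b => ?_) t s
  simpa only [Real.norm_eq_abs] using convex_univ.norm_image_sub_le_of_norm_hasDerivWithin_le
    (fun x _ => (hasDerivAt_sigmoid_deriv_deriv x).hasDerivWithinAt)
    (fun x _ => abs_sigmoid_third_deriv_le x) (Set.mem_univ b) (Set.mem_univ a)

end Real

section

variable {Ω : Type*} [MeasurableSpace Ω] {μ : Measure Ω}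

theorem integral_sum_mul_eq_zero {ι : Type*} [Fintype ι] {v : ι → Ω → ℝ}
    (hv : ∀ j, Integrable (v j) μ) (hmean : ∀ j, ∫ ω, v j ω ∂μ = 0) (y : ι → ℝ) :
    ∫ ω, ∑ j, y j * v j ω ∂μ = 0 := by
  rw [integral_finsetSum _ fun j _ => (hv j).const_mul (y j)]
  simp [integral_const_mul, hmean]

theorem integral_sq_sum_mul_of_iIndepFun [IsFiniteMeasure μ] {ι : Type*} [Fintype ι]
    {v : ι → Ω → ℝ} (hv : ∀ j, MemLp (v j) 2 μ) (hindep : iIndepFun v μ)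
    (hmean : ∀ j, ∫ ω, v j ω ∂μ = 0) (y : ι → ℝ) :
    ∫ ω, (∑ j, y j * v j ω) ^ 2 ∂μ = ∑ j, y j ^ 2 * ∫ ω, v j ω ^ 2 ∂μ := by
  set X : ι → Ω → ℝ := fun j ω => y j * v j ω
  have hX : ∀ j, MemLp (X j) 2 μ := fun j => (hv j).const_mul (y j)
  have hsum : (fun ω => ∑ j, X j ω) = ∑ j, X j := by ext ω; simp
  have hpair : Set.Pairwise (Finset.univ : Finset ι) fun i j => X i ⟂ᵢ[μ] X j :=
    fun i _ j _ hij => (hindep.indepFun hij).comp (measurable_const_mul (y i))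
      (measurable_const_mul (y j))
  calc ∫ ω, (∑ j, X j ω) ^ 2 ∂μ = Var[∑ j, X j; μ] := by
        rw [← hsum, variance_of_integral_eq_zero
          (memLp_finsetSum _ fun j _ => hX j).aemeasurable
          (integral_sum_mul_eq_zero (fun j => (hv j).integrable one_le_two) hmean y)]
    _ = ∑ j, Var[X j; μ] := IndepFun.variance_sum (fun j _ => hX j) hpair
    _ = ∑ j, y j ^ 2 * ∫ ω, v j ω ^ 2 ∂μ := by
        refine Finset.sum_congr rfl fun j _ => ?_
        rw [variance_const_mul, variance_of_integral_eq_zero (hv j).aemeasurable (hmean j)]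

theorem abs_integral_comp_mul_sub_le [IsProbabilityMeasure μ] {F : ℝ → ℝ} (hF : Measurable F)
    {a b c C : ℝ} (hrem : ∀ s, |F s - a - b * s - c * s ^ 2| ≤ C * |s| ^ 3) {X : Ω → ℝ}
    (hX : MemLp X 2 μ) (hX3 : Integrable (fun ω => |X ω| ^ 3) μ) (r : ℝ) :
    |∫ ω, F (r * X ω) ∂μ - a - b * r * ∫ ω, X ω ∂μ - c * r ^ 2 * ∫ ω, X ω ^ 2 ∂μ|
      ≤ C * |r| ^ 3 * ∫ ω, |X ω| ^ 3 ∂μ := by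
  have hX1 : Integrable X μ := hX.integrable one_le_two
  have hX2 : Integrable (fun ω => X ω ^ 2) μ := hX.integrable_sq
  set R : Ω → ℝ := fun ω => F (r * X ω) - a - b * (r * X ω) - c * (r * X ω) ^ 2
  have hR_le : ∀ ω, |R ω| ≤ C * |r| ^ 3 * |X ω| ^ 3 := fun ω =>
    (hrem (r * X ω)).trans_eq (by rw [abs_mul, mul_pow, mul_assoc])
  have hFX : AEStronglyMeasurable (fun ω => F (r * X ω)) μ :=
    (hF.comp_aemeasurable (hX1.aemeasurable.const_mul r)).aestronglyMeasurable
  have hR : Integrable R μ := (hX3.const_mul _).mono'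
    (((hFX.sub aestronglyMeasurable_const).sub ((hX1.1.const_mul r).const_mul b)).sub
      (((hX1.1.const_mul r).pow 2).const_mul c))
    (ae_of_all _ fun ω => (Real.norm_eq_abs _).trans_le (hR_le ω))
  have hlin : Integrable (fun ω => a + b * r * X ω) μ :=
    (integrable_const a).fun_add (hX1.const_mul _)
  have hpoly : Integrable (fun ω => a + b * r * X ω + c * r ^ 2 * X ω ^ 2) μ :=
    hlin.fun_add (hX2.const_mul _)
  have hF_eq :
      (fun ω => F (r * X ω)) = fun ω => R ω + (a + b * r * X ω + c * r ^ 2 * X ω ^ 2) := by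
    ext ω; simp only [R]; ring
  have hR_int : ∫ ω, R ω ∂μ
      = ∫ ω, F (r * X ω) ∂μ - a - b * r * ∫ ω, X ω ∂μ - c * r ^ 2 * ∫ ω, X ω ^ 2 ∂μ := by
    rw [hF_eq, integral_add hR hpoly, integral_add hlin (hX2.const_mul _),
      integral_add (integrable_const a) (hX1.const_mul _), integral_const_mul,
      integral_const_mul, integral_const, probReal_univ, one_smul]
    ring
  calc _ = |∫ ω, R ω ∂μ| := by rw [hR_int]
    _ ≤ ∫ ω, |R ω| ∂μ := abs_integral_le_integral_abs
    _ ≤ ∫ ω, C * |r| ^ 3 * |X ω| ^ 3 ∂μ := integral_mono hR.abs (hX3.const_mul _) hR_le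
    _ = C * |r| ^ 3 * ∫ ω, |X ω| ^ 3 ∂μ := integral_const_mul _ _

end

theorem right_derivative_marginal_logistic_general
    (pi : ℝ → ℝ) (hpi : ∀ s, pi s = Real.exp s / (1 + Real.exp s))
    {Ω : Type*} [MeasurableSpace Ω] (μ : Measure Ω) [IsProbabilityMeasure μ]
    {q : ℕ} (v : Fin q → Ω → ℝ)
    (hmeas : ∀ j, Measurable (v j))
    (hindep : iIndepFun v μ)
    (hmean : ∀ j, ∫ ω, v j ω ∂μ = 0)
    (hvar : ∀ j, ∫ ω, (v j ω) ^ 2 ∂μ = 2)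
    (t : ℝ) (y : Fin q → ℝ)
    (hthird : Integrable (fun ω => |∑ j, y j * v j ω| ^ 3) μ)
    (g : ℝ → ℝ)
    (hg : ∀ θ, g θ = ∫ ω, pi (t + Real.sqrt θ * ∑ j, y j * v j ω) ∂μ) :
    Tendsto (fun θ => (g θ - pi t) / θ) (nhdsWithin 0 (Set.Ioi 0))
      (nhds (pi t * (1 - pi t) * (1 - 2 * pi t) * ∑ j, (y j) ^ 2)) := by
  obtain rfl : pi = sigmoid := funext fun s => (hpi s).trans (sigmoid_eq_exp_div s).symm
  have hv : ∀ j, MemLp (v j) 2 μ := fun j =>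
    (memLp_two_iff_integrable_sq (hmeas j).aestronglyMeasurable).2
      (Integrable.of_integral_ne_zero (by rw [hvar j]; norm_num))
  have hS : MemLp (fun ω => ∑ j, y j * v j ω) 2 μ :=
    memLp_finsetSum _ fun j _ => (hv j).const_mul (y j)
  have hS_mean : ∫ ω, ∑ j, y j * v j ω ∂μ = 0 :=
    integral_sum_mul_eq_zero (fun j => (hv j).integrable one_le_two) hmean y
  have hS_sq : ∫ ω, (∑ j, y j * v j ω) ^ 2 ∂μ = 2 * ∑ j, y j ^ 2 := by
    rw [integral_sq_sum_mul_of_iIndepFun hv hindep hmean y, Finset.mul_sum]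
    exact Finset.sum_congr rfl fun j _ => by rw [hvar, mul_comm]
  set M := ∫ ω, |∑ j, y j * v j ω| ^ 3 ∂μ
  set K := sigmoid t * (1 - sigmoid t) * (1 - 2 * sigmoid t) * ∑ j, y j ^ 2
  have key : ∀ θ ∈ Set.Ioi (0 : ℝ), |(g θ - sigmoid t) / θ - K| ≤ 1 / 8 * M * √θ := by
    intro θ (hθ : 0 < θ)
    have h := abs_integral_comp_mul_sub_le (F := fun s => sigmoid (t + s))
      (continuous_sigmoid.comp (continuous_const_add t)).measurable
      (abs_sigmoid_taylor_two_le t) hS hthird √θ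
    rw [hS_mean, hS_sq, sq_sqrt hθ.le, abs_of_nonneg (sqrt_nonneg θ), ← hg θ] at h
    have hθ3 : √θ ^ 3 = θ * √θ := by rw [pow_succ, sq_sqrt hθ.le]
    rw [div_sub' hθ.ne', abs_div, abs_of_pos hθ, div_le_iff₀ hθ]
    refine le_of_eq_of_le ?_ (h.trans_eq ?_)
    · congr 1; ring
    · rw [hθ3]; ring
  have hsqrt : Tendsto (fun θ => 1 / 8 * M * √θ) (𝓝[>] 0) (𝓝 0) := by
    simpa using ((continuous_sqrt.tendsto 0).const_mul (1 / 8 * M)).mono_left nhdsWithin_le_nhds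
  exact tendsto_sub_nhds_zero_iff.1
    (squeeze_zero_norm' (eventually_nhdsWithin_of_forall key) hsqrt)

/-- For the logistic function `π`, fixed `t ∈ ℝ` and `y ∈ ℝ^q`, and a random vector `v`
with i.i.d. components of mean `0` and variance `2` such that `E[|yᵀv|³] < ∞`,
the function `g(θ) = E[π(t + √θ · yᵀv)]` has right derivative at `θ = 0` equal to
`π(t)(1−π(t))(1−2π(t)) · yᵀy`. -/
theorem right_derivative_marginal_logistic
    (pi : ℝ → ℝ) (hpi : ∀ s, pi s = Real.exp s / (1 + Real.exp s))
    {Ω : Type*} [MeasurableSpace Ω] (μ : Measure Ω) [IsProbabilityMeasure μ]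
    {q : ℕ} (v : Fin q → Ω → ℝ)
    (hmeas : ∀ j, Measurable (v j))
    (hindep : iIndepFun v μ)
    (hident : ∀ i j, μ.map (v i) = μ.map (v j))
    (hmean : ∀ j, ∫ ω, v j ω ∂μ = 0)
    (hvar : ∀ j, ∫ ω, (v j ω) ^ 2 ∂μ = 2)
    (t : ℝ) (y : Fin q → ℝ)
    (hthird : Integrable (fun ω => |∑ j, y j * v j ω| ^ 3) μ)
    (g : ℝ → ℝ)
    (hg : ∀ θ, g θ = ∫ ω, pi (t + Real.sqrt θ * ∑ j, y j * v j ω) ∂μ) :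
    Tendsto (fun θ => (g θ - pi t) / θ) (nhdsWithin 0 (Set.Ioi 0))
      (nhds (pi t * (1 - pi t) * (1 - 2 * pi t) * ∑ j, (y j) ^ 2)) :=
  right_derivative_marginal_logistic_general pi hpi μ v hmeas hindep hmean hvar t y hthird g hg
end

section
/- Let f be a probability density on ℝ^d × ℝ^q, and let g : ℝ^d × ℝ^q → ℝ be measurable with 0 < g(x,y) < 1 for all (x,y), with p := ∫ g(x,y) f(x,y) dx dy satisfying 0 < p < 1. Define the case density f₁(x,y) = g(x,y) f(x,y)/p and the control density f₀(x,y) = (1−g(x,y)) f(x,y)/(1−p). If g(x,y) = π(α_p + βᵀx + γ·(yᵀ1)) for some α_p ∈ ℝ, β ∈ ℝ^d, γ ∈ ℝ, then for every (x,y), f₁(x,y) = exp(α_r + βᵀx + γ·(yᵀ1)) f₀(x,y), where α_r = α_p + log((1−p)/p). -/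
/-! The logistic link makes the odds `g / (1 - g)` equal to `exp t` for the linear predictor `t`.
By Bayes's formula, `f₁ / f₀` is these odds times the inverse prior odds `(1 - p) / p`, and that
factor is absorbed into the intercept as `log ((1 - p) / p)`. -/

noncomputable def logistic (t : ℝ) : ℝ := Real.exp t / (1 + Real.exp t)

lemma logistic_eq_exp_mul_one_sub_logistic (t : ℝ) :
    logistic t = Real.exp t * (1 - logistic t) := by
  have : 1 + Real.exp t ≠ 0 := by positivity
  unfold logistic
  field_simp
  ring

lemma exp_add_log_div {p : ℝ} (hp0 : 0 < p) (hp1 : p < 1) (t : ℝ) :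
    Real.exp (t + Real.log ((1 - p) / p)) = Real.exp t * ((1 - p) / p) := by
  rw [Real.exp_add, Real.exp_log (div_pos (sub_pos.2 hp1) hp0)]

lemma mul_div_eq_mul_mul_one_sub_mul_div {g c F p : ℝ} (hp0 : p ≠ 0) (hp1 : 1 - p ≠ 0)
    (hodds : g = c * (1 - g)) :
    g * F / p = c * ((1 - p) / p) * ((1 - g) * F / (1 - p)) := by
  conv_lhs => rw [hodds]
  field_simp

theorem density_ratio_model_general
    {d q : ℕ}
    (f g f₀ f₁ : ((Fin d → ℝ) × (Fin q → ℝ)) → ℝ)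
    (α_p : ℝ) (β : Fin d → ℝ) (γ : ℝ)
    (hg : ∀ w : (Fin d → ℝ) × (Fin q → ℝ),
      g w = Real.exp (α_p + (∑ i, β i * w.1 i) + γ * ∑ j, w.2 j) /
        (1 + Real.exp (α_p + (∑ i, β i * w.1 i) + γ * ∑ j, w.2 j)))
    (p : ℝ) (hp0 : 0 < p) (hp1 : p < 1)
    (hf₁ : ∀ w, f₁ w = g w * f w / p)
    (hf₀ : ∀ w, f₀ w = (1 - g w) * f w / (1 - p))
    (α_r : ℝ) (hα_r : α_r = α_p + Real.log ((1 - p) / p)) :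
    ∀ w : (Fin d → ℝ) × (Fin q → ℝ),
      f₁ w = Real.exp (α_r + (∑ i, β i * w.1 i) + γ * ∑ j, w.2 j) * f₀ w := by
  intro w
  set t := α_p + (∑ i, β i * w.1 i) + γ * ∑ j, w.2 j
  have hodds : g w = Real.exp t * (1 - g w) := by
    rw [hg w]
    exact logistic_eq_exp_mul_one_sub_logistic t
  have hlinear : α_r + (∑ i, β i * w.1 i) + γ * ∑ j, w.2 j = t + Real.log ((1 - p) / p) := by
    rw [hα_r]
    ring
  rw [hf₁, hf₀, hlinear, exp_add_log_div hp0 hp1]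
  exact mul_div_eq_mul_mul_one_sub_mul_div hp0.ne' (sub_ne_zero.2 hp1.ne') hodds

/-- Density ratio model: if the disease probability is logistic,
`g(x,y) = π(α_p + βᵀx + γ·(yᵀ1))`, then the case density `f₁ = g f / p` and the control
density `f₀ = (1−g) f / (1−p)` satisfy
`f₁(x,y) = exp(α_r + βᵀx + γ·(yᵀ1)) f₀(x,y)` with `α_r = α_p + log((1−p)/p)`. -/
theorem density_ratio_model
    {d q : ℕ}
    (f g f₀ f₁ : ((Fin d → ℝ) × (Fin q → ℝ)) → ℝ)
    (hf_nonneg : ∀ w, 0 ≤ f w)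
    (hf_prob : ∫ w, f w = 1)
    (hg_meas : Measurable g)
    (hg01 : ∀ w, 0 < g w ∧ g w < 1)
    (α_p : ℝ) (β : Fin d → ℝ) (γ : ℝ)
    (hg : ∀ w : (Fin d → ℝ) × (Fin q → ℝ),
      g w = Real.exp (α_p + (∑ i, β i * w.1 i) + γ * ∑ j, w.2 j) /
        (1 + Real.exp (α_p + (∑ i, β i * w.1 i) + γ * ∑ j, w.2 j)))
    (p : ℝ) (hp_def : p = ∫ w, g w * f w) (hp0 : 0 < p) (hp1 : p < 1)
    (hf₁ : ∀ w, f₁ w = g w * f w / p)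
    (hf₀ : ∀ w, f₀ w = (1 - g w) * f w / (1 - p))
    (α_r : ℝ) (hα_r : α_r = α_p + Real.log ((1 - p) / p)) :
    ∀ w : (Fin d → ℝ) × (Fin q → ℝ),
      f₁ w = Real.exp (α_r + (∑ i, β i * w.1 i) + γ * ∑ j, w.2 j) * f₀ w :=
  density_ratio_model_general f g f₀ f₁ α_p β γ hg p hp0 hp1 hf₁ hf₀ α_r hα_r
end

section
/- Fix data w_1,…,w_n ∈ ℝ^k, D_1,…,D_n ∈ {0,1}, and c > 0. Define L_c(α, β) = ∑_{i=1}^n D_i (α + βᵀw_i) − ∑_{i=1}^n log(1 + c·exp(α + βᵀw_i)) for α ∈ ℝ, β ∈ ℝ^k. Then for all (α, β), L_c(α, β) = L_1(α + log c, β) − (∑_{i=1}^n D_i)·log c. In particular, with c = n₁/n₀, w_i the full covariate vector, this yields ℓ_{e,1}(α_r, β, γ) = ℓ_{e,2}(α_r + log(n₁/n₀), β, γ) − n₁ log(n₁/n₀) for the retrospective profile log-likelihood ℓ_{e,1} and the prospective log-likelihood ℓ_{e,2}. -/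
open BigOperators

/-- For `L_c(α,β) = ∑ᵢ Dᵢ(α + βᵀwᵢ) − ∑ᵢ log(1 + c·exp(α + βᵀwᵢ))` with `c > 0`,
one has `L_c(α,β) = L₁(α + log c, β) − (∑ᵢ Dᵢ)·log c`; in particular with `c = n₁/n₀`
this relates the retrospective profile log-likelihood to the prospective one. -/
theorem logistic_loglikelihood_intercept_shift
    {n k : ℕ} (w : Fin n → (Fin k → ℝ)) (D : Fin n → ℝ)
    (hD : ∀ i, D i = 0 ∨ D i = 1)
    (c : ℝ) (hc : 0 < c)
    (L : ℝ → ℝ → (Fin k → ℝ) → ℝ)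
    (hL : ∀ c' α β, L c' α β =
      ∑ i, D i * (α + ∑ a, β a * w i a)
      - ∑ i, Real.log (1 + c' * Real.exp (α + ∑ a, β a * w i a))) :
    ∀ (α : ℝ) (β : Fin k → ℝ),
      L c α β = L 1 (α + Real.log c) β - (∑ i, D i) * Real.log c := by
  intro α β
  rw [hL, hL]
  have hexp : ∀ i : Fin n,
      Real.exp (α + Real.log c + ∑ a, β a * w i a)
        = c * Real.exp (α + ∑ a, β a * w i a) := by
    intro i
    rw [show α + Real.log c + ∑ a, β a * w i a
        = Real.log c + (α + ∑ a, β a * w i a) by ring,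
      Real.exp_add, Real.exp_log hc]
  simp only [hexp, one_mul]
  rw [Finset.sum_mul]
  have : ∀ i : Fin n, D i * (α + Real.log c + ∑ a, β a * w i a)
      = D i * (α + ∑ a, β a * w i a) + D i * Real.log c := by
    intro i; ring
  simp only [this, Finset.sum_add_distrib]
  ring
end

section
/- Let f₀ be a probability density on ℝ^d × ℝ^q (control density of (x,y)), and suppose the case density satisfies f₁(x,y) = exp(α_r + βᵀx) f₀(x,y) for α_r ∈ ℝ, β ∈ ℝ^d. Let n₀, n₁ > 0, α = α_r + log(n₁/n₀), and assume ∫ |yᵀ1| f_j(x,y) dx dy < ∞ for j = 0,1. Then n₁ ∫ (1 − π(α + βᵀx)) (yᵀ1) f₁(x,y) dx dy = n₀ ∫ π(α + βᵀx) (yᵀ1) f₀(x,y) dx dy. Equivalently, if n₀ controls are sampled from f₀ and n₁ cases from f₁, the score U₂ = ∑_{i=1}^n (D_i − π(α + βᵀx_i)) y_iᵀ1 has expectation zero at the true parameter values. -/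
open MeasureTheory BigOperators

/-- Under the null density ratio model `f₁(x,y) = exp(α_r + βᵀx) f₀(x,y)` and with
`α = α_r + log(n₁/n₀)`, the retrospective score for the fixed genetic effect has
expectation zero:
`n₁ ∫ (1 − π(α+βᵀx)) (yᵀ1) f₁ = n₀ ∫ π(α+βᵀx) (yᵀ1) f₀`. -/
theorem retrospective_score_gamma_mean_zero
    (pi : ℝ → ℝ) (hpi : ∀ t, pi t = Real.exp t / (1 + Real.exp t))
    {d q : ℕ} (f₀ f₁ : ((Fin d → ℝ) × (Fin q → ℝ)) → ℝ)
    (hf₀_nonneg : ∀ w, 0 ≤ f₀ w) (hf₀_prob : ∫ w, f₀ w = 1)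
    (α_r : ℝ) (β : Fin d → ℝ)
    (hf₁ : ∀ w : (Fin d → ℝ) × (Fin q → ℝ),
      f₁ w = Real.exp (α_r + ∑ a, β a * w.1 a) * f₀ w)
    (n₀ n₁ : ℝ) (hn₀ : 0 < n₀) (hn₁ : 0 < n₁)
    (α : ℝ) (hα : α = α_r + Real.log (n₁ / n₀))
    (hint₀ : Integrable (fun w : (Fin d → ℝ) × (Fin q → ℝ) => (∑ j, w.2 j) * f₀ w))
    (hint₁ : Integrable (fun w : (Fin d → ℝ) × (Fin q → ℝ) => (∑ j, w.2 j) * f₁ w)) :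
    n₁ * ∫ w : (Fin d → ℝ) × (Fin q → ℝ),
        (1 - pi (α + ∑ a, β a * w.1 a)) * (∑ j, w.2 j) * f₁ w
      = n₀ * ∫ w : (Fin d → ℝ) × (Fin q → ℝ),
        pi (α + ∑ a, β a * w.1 a) * (∑ j, w.2 j) * f₀ w := by
  have key : ∀ w : (Fin d → ℝ) × (Fin q → ℝ),
      n₁ * ((1 - pi (α + ∑ a, β a * w.1 a)) * (∑ j, w.2 j) * f₁ w)
        = n₀ * (pi (α + ∑ a, β a * w.1 a) * (∑ j, w.2 j) * f₀ w) := by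
    intro w
    have hE : Real.exp (α + ∑ a, β a * w.1 a)
        = Real.exp (α_r + ∑ a, β a * w.1 a) * (n₁ / n₀) := by
      rw [hα, show α_r + Real.log (n₁ / n₀) + ∑ a, β a * w.1 a
          = (α_r + ∑ a, β a * w.1 a) + Real.log (n₁ / n₀) by ring,
        Real.exp_add, Real.exp_log (by positivity)]
    set s : ℝ := ∑ a, β a * w.1 a with hs
    have hEpos : (0:ℝ) < Real.exp (α_r + s) := Real.exp_pos _
    have hden : (1 : ℝ) + Real.exp (α + s) ≠ 0 := by positivity
    rw [hpi, hf₁ w]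
    field_simp
    rw [hE]
    field_simp
    ring
  rw [← integral_const_mul, ← integral_const_mul]
  exact integral_congr_ae (Filter.Eventually.of_forall key)
end

section
/- Let Z₀ and Z₁ be independent standard normal random variables (each with law gaussianReal 0 1). Then for every t ≥ 0, P(Z₀² + (max(Z₁,0))² ≤ t) = (1/2)·P(Z₀² ≤ t) + (1/2)·P(Z₀² + Z₁² ≤ t). That is, the law of Z₀² + (Z₁⁺)² is the 1/2–1/2 mixture of the chi-squared distributions with one and two degrees of freedom. -/
/-!
Both sides only depend on the joint law `ρ = N(0,1) ⊗ N(0,1)` of `(Z₀, Z₁)`. On `{Z₁ < 0}` the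
statistic is `Z₀²`, on `{Z₁ ≥ 0}` it is `Z₀² + Z₁²`. Since `ρ` is invariant under
`(x, y) ↦ (x, -y)` and gives no mass to `{y = 0}`, every reflection-invariant event splits into
two halves of equal mass along the sign of `y`, which gives the two weights `1/2`.
-/

open MeasureTheory ProbabilityTheory Set

section Reflection

variable {α : Type*} [MeasurableSpace α] {ρ : Measure (α × ℝ)} {A : Set (α × ℝ)}

lemma measure_inter_snd_neg_eq_nonneg (hρ : ρ.map (Prod.map id Neg.neg) = ρ)
    (h0 : ρ {p | p.2 = 0} = 0) (hAsymm : Prod.map id Neg.neg ⁻¹' A = A) :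
    ρ (A ∩ {p | p.2 < 0}) = ρ (A ∩ {p | 0 ≤ p.2}) := by
  have hpos : ρ (A ∩ {p | 0 < p.2}) = ρ (A ∩ {p | 0 ≤ p.2}) := by
    rw [← measure_sdiff_null (s := A ∩ {p | 0 ≤ p.2}) h0]
    congr 1
    ext p
    simp [lt_iff_le_and_ne, eq_comm, and_assoc]
  have hreflect : ρ (A ∩ {p | 0 < p.2}) = ρ (Prod.map id Neg.neg ⁻¹' (A ∩ {p | 0 < p.2})) := by
    conv_lhs => rw [← hρ]
    exact ((MeasurableEquiv.refl α).prodCongr (MeasurableEquiv.neg ℝ)).map_apply _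
  rw [← hpos, hreflect, preimage_inter, hAsymm]
  congr 1
  ext p
  simp

lemma measure_inter_snd_neg_add_nonneg :
    ρ (A ∩ {p | p.2 < 0}) + ρ (A ∩ {p | 0 ≤ p.2}) = ρ A := by
  rw [← measure_inter_add_sdiff A (measurableSet_lt measurable_snd measurable_const)]
  congr 2
  ext p
  simp

lemma measure_inter_snd_neg_eq_half (hρ : ρ.map (Prod.map id Neg.neg) = ρ)
    (h0 : ρ {p | p.2 = 0} = 0) (hAsymm : Prod.map id Neg.neg ⁻¹' A = A) :
    ρ (A ∩ {p | p.2 < 0}) = 1 / 2 * ρ A := by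
  rw [← measure_inter_snd_neg_add_nonneg (ρ := ρ) (A := A),
    ← measure_inter_snd_neg_eq_nonneg hρ h0 hAsymm, ← two_mul, ← mul_assoc, one_div,
    ENNReal.inv_mul_cancel two_ne_zero ENNReal.ofNat_ne_top, one_mul]

lemma measure_inter_snd_nonneg_eq_half (hρ : ρ.map (Prod.map id Neg.neg) = ρ)
    (h0 : ρ {p | p.2 = 0} = 0) (hAsymm : Prod.map id Neg.neg ⁻¹' A = A) :
    ρ (A ∩ {p | 0 ≤ p.2}) = 1 / 2 * ρ A := by
  rw [← measure_inter_snd_neg_eq_nonneg hρ h0 hAsymm,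
    measure_inter_snd_neg_eq_half hρ h0 hAsymm]

end Reflection

lemma setOf_sq_add_max_sq_le_eq_union (t : ℝ) :
    {p : ℝ × ℝ | p.1 ^ 2 + max p.2 0 ^ 2 ≤ t} =
      ({p | p.1 ^ 2 ≤ t} ∩ {p | p.2 < 0}) ∪ ({p | p.1 ^ 2 + p.2 ^ 2 ≤ t} ∩ {p | 0 ≤ p.2}) := by
  ext ⟨x, y⟩
  rcases lt_or_ge y 0 with hy | hy
  · simp [hy, hy.le, not_le.mpr hy]
  · simp [hy, not_lt.mpr hy]

lemma measure_sq_add_max_sq_le {ρ : Measure (ℝ × ℝ)} (hρ : ρ.map (Prod.map id Neg.neg) = ρ)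
    (h0 : ρ {p | p.2 = 0} = 0) (t : ℝ) :
    ρ {p | p.1 ^ 2 + max p.2 0 ^ 2 ≤ t}
      = 1 / 2 * ρ {p | p.1 ^ 2 ≤ t} + 1 / 2 * ρ {p | p.1 ^ 2 + p.2 ^ 2 ≤ t} := by
  have hsum : MeasurableSet {p : ℝ × ℝ | p.1 ^ 2 + p.2 ^ 2 ≤ t} :=
    measurableSet_le (by fun_prop) (by fun_prop)
  have hsymm (f : ℝ × ℝ → ℝ) (hf : ∀ x y, f (x, -y) = f (x, y)) :
      Prod.map id Neg.neg ⁻¹' {p | f p ≤ t} = {p | f p ≤ t} := by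
    ext ⟨x, y⟩
    simp [hf]
  have hdisj : Disjoint ({p : ℝ × ℝ | p.1 ^ 2 ≤ t} ∩ {p | p.2 < 0})
      ({p | p.1 ^ 2 + p.2 ^ 2 ≤ t} ∩ {p | 0 ≤ p.2}) :=
    disjoint_left.mpr fun p ⟨_, (hneg : p.2 < 0)⟩ ⟨_, (hnonneg : 0 ≤ p.2)⟩ => hneg.not_ge hnonneg
  rw [setOf_sq_add_max_sq_le_eq_union, measure_union hdisj
      (hsum.inter (measurableSet_le measurable_const measurable_snd)),
    measure_inter_snd_neg_eq_half hρ h0 (hsymm _ fun _ _ => rfl),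
    measure_inter_snd_nonneg_eq_half hρ h0 (hsymm _ fun _ _ => by rw [neg_sq])]

lemma gaussianReal_singleton (m : ℝ) {v : NNReal} (hv : v ≠ 0) (x : ℝ) :
    gaussianReal m v {x} = 0 :=
  gaussianReal_absolutelyContinuous m hv Real.volume_singleton

namespace MeasureTheory.Measure

variable {α : Type*} [MeasurableSpace α] (ν₀ : Measure α) {ν₁ : Measure ℝ}

lemma map_prodMap_id_neg_prod [SFinite ν₀] [SFinite ν₁] (h : ν₁.map Neg.neg = ν₁) :
    (ν₀.prod ν₁).map (Prod.map id Neg.neg) = ν₀.prod ν₁ := by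
  rw [← map_prod_map _ _ measurable_id measurable_neg, map_id, h]

lemma prod_setOf_snd_eq_zero [SFinite ν₁] (h : ν₁ {0} = 0) : (ν₀.prod ν₁) {p | p.2 = 0} = 0 := by
  rw [show {p : α × ℝ | p.2 = 0} = univ ×ˢ {0} by ext; simp, prod_prod, h, mul_zero]

end MeasureTheory.Measure

/-- For independent standard normal random variables `Z₀, Z₁`, the law of `Z₀² + (Z₁⁺)²`
is the 1/2–1/2 mixture of the chi-squared distributions with one and two degrees of
freedom: `P(Z₀² + (Z₁⁺)² ≤ t) = (1/2)·P(Z₀² ≤ t) + (1/2)·P(Z₀² + Z₁² ≤ t)` for `t ≥ 0`. -/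
theorem sq_plus_pos_part_sq_gaussian_cdf
    {Ω : Type*} [MeasurableSpace Ω] (μ : Measure Ω) [IsProbabilityMeasure μ]
    (Z₀ Z₁ : Ω → ℝ) (hZ₀meas : Measurable Z₀) (hZ₁meas : Measurable Z₁)
    (hZ₀ : μ.map Z₀ = gaussianReal 0 1) (hZ₁ : μ.map Z₁ = gaussianReal 0 1)
    (hindep : IndepFun Z₀ Z₁ μ) :
    ∀ t : ℝ, 0 ≤ t →
      μ {ω | (Z₀ ω) ^ 2 + (max (Z₁ ω) 0) ^ 2 ≤ t}
        = (1 / 2) * μ {ω | (Z₀ ω) ^ 2 ≤ t}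
          + (1 / 2) * μ {ω | (Z₀ ω) ^ 2 + (Z₁ ω) ^ 2 ≤ t} := by
  intro t _
  have hlaw : μ.map (fun ω => (Z₀ ω, Z₁ ω)) = (gaussianReal 0 1).prod (gaussianReal 0 1) := by
    rw [hindep.map_prod_eq_prod_map_map hZ₀meas.aemeasurable hZ₁meas.aemeasurable, hZ₀, hZ₁]
  have hρ := Measure.map_prodMap_id_neg_prod (gaussianReal 0 1)
    (by simpa using gaussianReal_map_neg (μ := 0) (v := 1))
  have h0 := Measure.prod_setOf_snd_eq_zero (gaussianReal 0 1)
    (gaussianReal_singleton 0 one_ne_zero 0)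
  have hmix := measure_sq_add_max_sq_le hρ h0 t
  rw [← hlaw, Measure.map_apply (by fun_prop) (measurableSet_le (by fun_prop) (by fun_prop)),
    Measure.map_apply (by fun_prop) (measurableSet_le (by fun_prop) (by fun_prop)),
    Measure.map_apply (by fun_prop) (measurableSet_le (by fun_prop) (by fun_prop))] at hmix
  exact hmix
end

section
/- Let Z₀ be a standard normal random variable (law gaussianReal 0 1) independent of the random vector (Z₁,…,Z_m), and let φ(v) = (2π)^{-1/2} exp(−v²/2) denote the standard normal density. Then for every t ≥ 0, P(Z₀² + max_{1≤i≤m} (max(Z_i,0))² ≤ t) = 2 ∫₀^{√t} P(Z₁ ≤ √(t−v²), …, Z_m ≤ √(t−v²)) · φ(v) dv. -/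
open MeasureTheory ProbabilityTheory BigOperators
open scoped ENNReal NNReal

/-- For a standard normal `Z₀` independent of the random vector `(Z₁,…,Z_m)`, and
`φ` the standard normal density, for every `t ≥ 0`:
`P(Z₀² + max_i (Z_i⁺)² ≤ t) = 2 ∫₀^{√t} P(∀ i, Z_i ≤ √(t−v²)) φ(v) dv`. -/
theorem ss_max_limit_cdf
    {Ω : Type*} [MeasurableSpace Ω] (μ : Measure Ω) [IsProbabilityMeasure μ]
    (Z₀ : Ω → ℝ) (hZ₀meas : Measurable Z₀) (hZ₀ : μ.map Z₀ = gaussianReal 0 1)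
    {m : ℕ} (hm : 0 < m) (Z : Fin m → Ω → ℝ) (hZmeas : ∀ i, Measurable (Z i))
    (hindep : IndepFun Z₀ (fun ω => fun i => Z i ω) μ)
    (hne : (Finset.univ : Finset (Fin m)).Nonempty)
    (φ : ℝ → ℝ) (hφ : ∀ v, φ v = (Real.sqrt (2 * Real.pi))⁻¹ * Real.exp (-(v ^ 2) / 2)) :
    ∀ t : ℝ, 0 ≤ t →
      (μ {ω | (Z₀ ω) ^ 2 + Finset.univ.sup' hne (fun i => (max (Z i ω) 0) ^ 2) ≤ t}).toReal
        = 2 * ∫ v in (0 : ℝ)..Real.sqrt t,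
            (μ {ω | ∀ i, Z i ω ≤ Real.sqrt (t - v ^ 2)}).toReal * φ v := by
  intro t ht
  set s := Real.sqrt t with hs
  set W : Ω → (Fin m → ℝ) := fun ω => fun i => Z i ω with hW
  have hWmeas : Measurable W := measurable_pi_lambda _ hZmeas
  set ν : Measure (Fin m → ℝ) := μ.map W with hν
  haveI : IsProbabilityMeasure ν := Measure.isProbabilityMeasure_map hWmeas.aemeasurable
  set g : (Fin m → ℝ) → ℝ := fun w => Finset.univ.sup' hne fun i => (max (w i) 0) ^ 2 with hg
  have hgmeas : Measurable g := by
    have h := Finset.measurable_sup' (s := (Finset.univ : Finset (Fin m))) hne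
      (f := fun (i : Fin m) (w : Fin m → ℝ) => (max (w i) 0) ^ 2)
      (fun i _ => ((measurable_pi_apply i).max measurable_const).pow_const 2)
    have heq : g = Finset.univ.sup' hne fun (i : Fin m) (w : Fin m → ℝ) => (max (w i) 0) ^ 2 := by
      funext w
      simp [hg, Finset.sup'_apply]
    rwa [heq]
  have hgnonneg : ∀ w, 0 ≤ g w := by
    intro w
    obtain ⟨i, hi⟩ := hne
    exact le_trans (by positivity) (Finset.le_sup' (fun i => (max (w i) 0) ^ 2) hi)
  set S : Set (ℝ × (Fin m → ℝ)) := {p | p.1 ^ 2 + g p.2 ≤ t} with hS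
  have hSmeas : MeasurableSet S := by
    have : Measurable fun p : ℝ × (Fin m → ℝ) => p.1 ^ 2 + g p.2 :=
      (measurable_fst.pow_const 2).add (hgmeas.comp measurable_snd)
    exact measurableSet_le this measurable_const
  set F : ℝ → ℝ := fun v => (ν {w | v ^ 2 + g w ≤ t}).toReal with hF
  -- Step 1 : μ E = ∫⁻ sections dγ
  have hpairmeas : Measurable fun ω => (Z₀ ω, W ω) := hZ₀meas.prodMk hWmeas
  have hmap : μ.map (fun ω => (Z₀ ω, W ω)) = (gaussianReal 0 1).prod ν := by
    rw [← hZ₀]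
    exact (indepFun_iff_map_prod_eq_prod_map_map hZ₀meas.aemeasurable
      hWmeas.aemeasurable).mp hindep
  have h1 : μ {ω | (Z₀ ω) ^ 2 + Finset.univ.sup' hne (fun i => (max (Z i ω) 0) ^ 2) ≤ t}
      = ∫⁻ v, ν {w | v ^ 2 + g w ≤ t} ∂(gaussianReal 0 1) := by
    have h0 : μ {ω | (Z₀ ω) ^ 2 + Finset.univ.sup' hne (fun i => (max (Z i ω) 0) ^ 2) ≤ t}
        = μ.map (fun ω => (Z₀ ω, W ω)) S := by
      rw [Measure.map_apply hpairmeas hSmeas]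
      rfl
    rw [h0, hmap, Measure.prod_apply hSmeas]
    exact lintegral_congr fun v => rfl
  -- Step 2 : toReal and lintegral → integral
  have hFkermeas : Measurable fun v => ν {w | v ^ 2 + g w ≤ t} :=
    measurable_measure_prodMk_left hSmeas
  have h2 : (μ {ω | (Z₀ ω) ^ 2 +
      Finset.univ.sup' hne (fun i => (max (Z i ω) 0) ^ 2) ≤ t}).toReal
      = ∫ v, F v ∂(gaussianReal 0 1) := by
    rw [h1, ← integral_toReal hFkermeas.aemeasurable]
    exact Filter.Eventually.of_forall fun v => lt_of_le_of_lt prob_le_one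
      ENNReal.one_lt_top
  -- Step 3 : gaussian integral as density integral
  have hφnonneg' : ∀ v, 0 ≤ gaussianPDFReal 0 1 v := fun v => gaussianPDFReal_nonneg 0 1 v
  have hφeq : ∀ v, gaussianPDFReal 0 1 v = φ v := by
    intro v
    rw [hφ, gaussianPDFReal]
    norm_num
  have hφnonneg : ∀ v, 0 ≤ φ v := fun v => (hφeq v) ▸ hφnonneg' v
  have hφmeas : Measurable φ := (funext hφeq : gaussianPDFReal 0 1 = φ) ▸
    measurable_gaussianPDFReal 0 1
  have h3 : ∫ v, F v ∂(gaussianReal 0 1) = ∫ v, F v * φ v := by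
    rw [gaussianReal_of_var_ne_zero 0 one_ne_zero]
    have hdens : (gaussianPDF 0 1) = fun v => ((gaussianPDFReal 0 1 v).toNNReal : ℝ≥0∞) := by
      funext v
      rw [gaussianPDF_def]
      rfl
    rw [hdens, integral_withDensity_eq_integral_smul
      ((measurable_gaussianPDFReal 0 1).real_toNNReal) F]
    congr 1
    funext v
    rw [NNReal.smul_def, smul_eq_mul, Real.coe_toNNReal _ (hφnonneg' v), hφeq v, mul_comm]
  -- bounds for F
  have hF0 : ∀ v, 0 ≤ F v := fun v => ENNReal.toReal_nonneg
  have hF1 : ∀ v, F v ≤ 1 := fun v =>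
    ENNReal.toReal_le_of_le_ofReal one_pos.le (by simpa using prob_le_one)
  -- evenness
  have heven : ∀ v : ℝ, F v * φ v = F |v| * φ |v| := by
    intro v
    have h1 : |v| ^ 2 = v ^ 2 := sq_abs v
    simp [hF, hφ, h1]
  -- Step 4 : even function
  have h4 : ∫ v, F v * φ v = 2 * ∫ v in Set.Ioi (0:ℝ), F v * φ v := by
    rw [← integral_comp_abs (f := fun v => F v * φ v)]
    exact integral_congr_ae (Filter.Eventually.of_forall heven)
  -- integrability
  have hφint : Integrable φ :=
    (funext hφeq : gaussianPDFReal 0 1 = φ) ▸ integrable_gaussianPDFReal 0 1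
  have hFmeas : Measurable F := hFkermeas.ennreal_toReal
  have hint : Integrable fun v => F v * φ v := by
    refine Integrable.mono' hφint (hFmeas.mul hφmeas).aestronglyMeasurable ?_
    refine Filter.Eventually.of_forall fun v => ?_
    rw [Real.norm_eq_abs, abs_of_nonneg (mul_nonneg (hF0 v) (hφnonneg v))]
    nlinarith [hF0 v, hF1 v, hφnonneg v]
  -- Step 5 : F vanishes beyond s
  have hFzero : ∀ v ∈ Set.Ioi s, F v * φ v = 0 := by
    intro v hv
    have hv' : s < v := hv
    have hvt : t < v ^ 2 := by
      nlinarith [Real.sq_sqrt ht, Real.sqrt_nonneg t]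
    have hempty : {w | v ^ 2 + g w ≤ t} = (∅ : Set (Fin m → ℝ)) := by
      ext w
      simp only [Set.mem_setOf_eq, Set.mem_empty_iff_false, iff_false, not_le]
      nlinarith [hgnonneg w]
    simp [hF, hempty]
  have hIoi : ∫ v in Set.Ioi s, F v * φ v = 0 := by
    rw [setIntegral_congr_fun measurableSet_Ioi hFzero]
    simp
  have h5 : ∫ v in Set.Ioi (0:ℝ), F v * φ v = ∫ v in Set.Ioc (0:ℝ) s, F v * φ v := by
    rw [← Set.Ioc_union_Ioi_eq_Ioi (Real.sqrt_nonneg t),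
      setIntegral_union (Set.Ioc_disjoint_Ioi le_rfl) measurableSet_Ioi
        hint.integrableOn hint.integrableOn, hIoi, add_zero]
  -- Step 6 : identify F with the target on (0, s]
  have h6 : ∫ v in Set.Ioc (0:ℝ) s, F v * φ v
      = ∫ v in Set.Ioc (0:ℝ) s,
          (μ {ω | ∀ i, Z i ω ≤ Real.sqrt (t - v ^ 2)}).toReal * φ v := by
    refine setIntegral_congr_fun measurableSet_Ioc fun v hv => ?_
    have hv2 : v ^ 2 ≤ t := by
      have h1 : v ≤ s := hv.2
      have h0 : (0:ℝ) ≤ v := hv.1.le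
      nlinarith [Real.sq_sqrt ht]
    have hset : {w : Fin m → ℝ | v ^ 2 + g w ≤ t}
        = {w : Fin m → ℝ | ∀ i, w i ≤ Real.sqrt (t - v ^ 2)} := by
      ext w
      simp only [Set.mem_setOf_eq]
      constructor
      · intro h i
        have hgle : g w ≤ t - v ^ 2 := by linarith
        have hi : (max (w i) 0) ^ 2 ≤ t - v ^ 2 :=
          le_trans (Finset.le_sup' (fun i => (max (w i) 0) ^ 2) (Finset.mem_univ i)) hgle
        have h2 : max (w i) 0 ≤ Real.sqrt (t - v ^ 2) :=
          (Real.le_sqrt (le_max_right _ _) (by linarith)).mpr hi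
        exact le_trans (le_max_left _ _) h2
      · intro h
        have hgle : g w ≤ t - v ^ 2 := by
          refine Finset.sup'_le hne _ fun i _ => ?_
          have h1 : max (w i) 0 ≤ Real.sqrt (t - v ^ 2) :=
            max_le (h i) (Real.sqrt_nonneg _)
          nlinarith [Real.sq_sqrt (show (0:ℝ) ≤ t - v ^ 2 by linarith),
            Real.sqrt_nonneg (t - v ^ 2), le_max_right (w i) 0]
        linarith
    have hmapset : ν {w : Fin m → ℝ | ∀ i, w i ≤ Real.sqrt (t - v ^ 2)}
        = μ {ω | ∀ i, Z i ω ≤ Real.sqrt (t - v ^ 2)} := by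
      rw [hν, Measure.map_apply hWmeas]
      · rfl
      · have : {w : Fin m → ℝ | ∀ i, w i ≤ Real.sqrt (t - v ^ 2)}
            = ⋂ i, {w : Fin m → ℝ | w i ≤ Real.sqrt (t - v ^ 2)} := by
          ext w; simp
        rw [this]
        exact MeasurableSet.iInter fun i =>
          measurableSet_le (measurable_pi_apply i) measurable_const
    rw [hF]
    simp only [hset, hmapset]
  -- Step 7 : Ioc integral = interval integral
  have h7 : ∫ v in Set.Ioc (0:ℝ) s,
      (μ {ω | ∀ i, Z i ω ≤ Real.sqrt (t - v ^ 2)}).toReal * φ v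
      = ∫ v in (0:ℝ)..s,
          (μ {ω | ∀ i, Z i ω ≤ Real.sqrt (t - v ^ 2)}).toReal * φ v := by
    rw [intervalIntegral.integral_of_le (Real.sqrt_nonneg t)]
  rw [h2, h3, h4, h5, h6, h7]
end
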